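/- arXiv:2305.04418 — 3 statements merged into one kernel-verified Lean document; each statement's English description precedes it below -/
import Mathlib

section
/- Every even lattice of rank 2 and signature (1,1) with discriminant number 5 is isometric to the lattice with Gram matrix [[2,1],[1,−2]]: for every symmetric 2×2 integer matrix M with even diagonal entries, signature (1,1) and det M = −5, there exists P ∈ GL₂(ℤ) with PᵀMP = [[2,1],[1,−2]]. -/
open Matrix

/-- Gram matrix of the even hyperbolic lattice with Gram matrix [[2,1],[1,-2]]. -/
def targetGram : Matrix (Fin 2) (Fin 2) ℤ :=
  !![2, 1;
    1, -2]

/-- The Gram matrix of the binary quadratic form a x² + b x y + c y². -/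
def gram (a b c : ℤ) : Matrix (Fin 2) (Fin 2) ℤ := !![2*a, b; b, 2*c]

/-- The form (a,b,c) is equivalent to the target form. -/
def Eqv (a b c : ℤ) : Prop :=
  ∃ P : Matrix (Fin 2) (Fin 2) ℤ, IsUnit P.det ∧ Pᵀ * gram a b c * P = targetGram

lemma transpose2 (a b c d : ℤ) : (!![a, b; c, d])ᵀ = !![a, c; b, d] := by
  ext i j; fin_cases i <;> fin_cases j <;> rfl

lemma eqv_step (a b c a' b' c' : ℤ) (P : Matrix (Fin 2) (Fin 2) ℤ)
    (hP : IsUnit P.det) (h : Pᵀ * gram a b c * P = gram a' b' c')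
    (h2 : Eqv a' b' c') : Eqv a b c := by
  obtain ⟨Q, hQ, hQ2⟩ := h2
  refine ⟨P * Q, by simpa using hP.mul hQ, ?_⟩
  calc (P * Q)ᵀ * gram a b c * (P * Q)
      = Qᵀ * (Pᵀ * gram a b c * P) * Q := by
        rw [transpose_mul]; noncomm_ring
    _ = targetGram := by rw [h, hQ2]

lemma shift_transform (a b c t : ℤ) :
    (!![1, t; 0, 1] : Matrix (Fin 2) (Fin 2) ℤ)ᵀ * gram a b c * !![1, t; 0, 1]
      = gram a (b + 2*a*t) (a*t*t + b*t + c) := by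
  rw [transpose2]
  ext i j
  fin_cases i <;> fin_cases j <;>
    simp [_root_.gram, Matrix.mul_apply, Fin.sum_univ_two] <;> ring

lemma swap_transform (a b c : ℤ) :
    (!![0, 1; 1, 0] : Matrix (Fin 2) (Fin 2) ℤ)ᵀ * gram a b c * !![0, 1; 1, 0]
      = gram c b a := by
  rw [transpose2]
  ext i j
  fin_cases i <;> fin_cases j <;>
    simp [_root_.gram, Matrix.mul_apply, Fin.sum_univ_two] <;> ring

lemma no_sqrt5 (b : ℤ) (h : b * b = 5) : False := by
  have h1 : b ≤ 2 := by nlinarith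
  have h2 : -2 ≤ b := by nlinarith
  interval_cases b <;> omega

lemma shift_exists_pos (a b : ℤ) (ha : 0 < a) :
    ∃ t : ℤ, (b + 2*a*t).natAbs ≤ a.natAbs := by
  have hn0 : (0:ℤ) < 2*a := by omega
  have h0 : 0 ≤ b % (2*a) := Int.emod_nonneg b (by omega)
  have h1 : b % (2*a) < 2*a := Int.emod_lt_of_pos b hn0
  rcases le_or_gt (b % (2*a)) a with hr | hr
  · refine ⟨-(b / (2*a)), ?_⟩
    have e : b + 2*a*(-(b / (2*a))) = b % (2*a) := by
      linear_combination - Int.emod_add_mul_ediv b (2*a)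
    rw [e]
    omega
  · refine ⟨-(b / (2*a)) - 1, ?_⟩
    have e : b + 2*a*(-(b / (2*a)) - 1) = b % (2*a) - 2*a := by
      linear_combination - Int.emod_add_mul_ediv b (2*a)
    rw [e]
    omega

lemma shift_exists (a b : ℤ) (ha : a ≠ 0) :
    ∃ t : ℤ, (b + 2*a*t).natAbs ≤ a.natAbs := by
  rcases lt_or_gt_of_ne ha with h | h
  · obtain ⟨t, ht⟩ := shift_exists_pos (-a) b (by omega)
    refine ⟨-t, ?_⟩
    have e : b + 2*a*(-t) = b + 2*(-a)*t := by ring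
    rw [e]
    simpa using ht
  · exact shift_exists_pos a b h

lemma eqv_base1 : Eqv 1 1 (-1) := by
  refine ⟨1, by simp, ?_⟩
  simp [_root_.gram, targetGram]

lemma eqv_base2 : Eqv 1 (-1) (-1) := by
  refine ⟨!![1, 0; 0, -1], ?_, ?_⟩
  · rw [Matrix.det_fin_two_of, Int.isUnit_iff]; norm_num
  · rw [transpose2]
    ext i j
    fin_cases i <;> fin_cases j <;>
      simp [_root_.gram, targetGram, Matrix.mul_apply, Fin.sum_univ_two]

lemma eqv_base3 : Eqv (-1) 1 1 := by
  refine eqv_step _ _ _ 1 1 (-1) !![0, 1; 1, 0] ?_ ?_ eqv_base1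
  · rw [Matrix.det_fin_two_of, Int.isUnit_iff]; norm_num
  · simpa using swap_transform (-1) 1 1

lemma eqv_base4 : Eqv (-1) (-1) 1 := by
  refine eqv_step _ _ _ 1 (-1) (-1) !![0, 1; 1, 0] ?_ ?_ eqv_base2
  · rw [Matrix.det_fin_two_of, Int.isUnit_iff]; norm_num
  · simpa using swap_transform (-1) (-1) 1

lemma key : ∀ n : ℕ, ∀ a b c : ℤ, a.natAbs ≤ n → b*b - 4*a*c = 5 → Eqv a b c := by
  intro n
  induction n with
  | zero =>
    intro a b c h hd
    have ha : a = 0 := by omega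
    subst ha
    exact absurd (by linarith : b * b = 5) (fun h => no_sqrt5 b h)
  | succ n ih =>
    intro a b c hle hd
    have ha : a ≠ 0 := by
      rintro rfl
      exact no_sqrt5 b (by linarith)
    obtain ⟨t, ht⟩ := shift_exists a b ha
    set b' := b + 2*a*t with hb'
    set c' := a*t*t + b*t + c with hc'
    have hd' : b'*b' - 4*a*c' = 5 := by rw [hb', hc']; ring_nf; linear_combination hd
    have hstep : Eqv a b' c' → Eqv a b c := by
      intro h
      refine eqv_step a b c a b' c' !![1, t; 0, 1] ?_ (shift_transform a b c t) h
      rw [Matrix.det_fin_two_of, Int.isUnit_iff]; norm_num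
    clear_value b' c'
    rcases le_or_gt a.natAbs 1 with h1 | h1
    · -- |a| = 1
      apply hstep
      have ha1 : a = 1 ∨ a = -1 := by omega
      have hb1 : b' = -1 ∨ b' = 0 ∨ b' = 1 := by omega
      rcases ha1 with rfl | rfl <;> rcases hb1 with rfl | rfl | rfl <;>
        [skip; skip; skip; skip; skip; skip] <;>
        first
        | (exfalso; omega)
        | (have hcval : c' = -1 := by omega
           rw [hcval]
           first
           | exact eqv_base1
           | exact eqv_base2)
        | (have hcval : c' = 1 := by omega
           rw [hcval]
           first
           | exact eqv_base3
           | exact eqv_base4)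
    · -- |a| ≥ 2 : reduce
      have ha2 : 4 ≤ a*a := by
        have : 2 ≤ a.natAbs := h1
        have := Int.natAbs_le_iff_mul_self_le.mp (show (2:ℤ).natAbs ≤ a.natAbs from this)
        linarith
      have hBa : b'*b' ≤ a*a := Int.natAbs_le_iff_mul_self_le.mp ht
      have hB0 : 0 ≤ b'*b' := mul_self_nonneg b'
      have keyid : 16*(a*a)*(c'*c') = (b'*b'-5)*(b'*b'-5) := by
        linear_combination (-(b'*b'-5) - 4*a*c') * hd'
      have p3 : (b'*b'-5)*(b'*b'-5) < 16*(a*a)*(a*a) := by nlinarith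
      have hlt : c'*c' < a*a := by nlinarith
      have hna : c'.natAbs < a.natAbs := Int.natAbs_lt_iff_mul_self_lt.mpr hlt
      apply hstep
      refine eqv_step a b' c' c' b' a !![0, 1; 1, 0] ?_ (swap_transform a b' c') ?_
      · rw [Matrix.det_fin_two_of, Int.isUnit_iff]; norm_num
      · exact ih c' b' a (by omega) (by linarith)

/-- Every even lattice of rank 2 and signature (1,1) with the stated discriminant
number is isometric to the even hyperbolic lattice with Gram matrix [[2,1],[1,-2]]. -/
theorem statement_4 (M : Matrix (Fin 2) (Fin 2) ℤ)
    (hsymm : M.IsSymm)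
    (heven : ∀ i, 2 ∣ M i i)
    (hH : (M.map (Int.cast : ℤ → ℝ)).IsHermitian)
    (hpos : (Finset.univ.filter fun i => 0 < hH.eigenvalues i).card = 1)
    (hneg : (Finset.univ.filter fun i => hH.eigenvalues i < 0).card = 1)
    (hdet : M.det = -5) :
    ∃ P : Matrix (Fin 2) (Fin 2) ℤ, IsUnit P.det ∧ Pᵀ * M * P = targetGram := by
  obtain ⟨a, ha⟩ := heven 0
  obtain ⟨c, hc⟩ := heven 1
  have hb : M 1 0 = M 0 1 := hsymm.apply 0 1
  have hM : M = gram a (M 0 1) c := by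
    rw [_root_.gram]
    conv_lhs => rw [Matrix.eta_fin_two M]
    rw [ha, hc, hb]
  have hd : (M 0 1) * (M 0 1) - 4*a*c = 5 := by
    rw [hM] at hdet
    rw [_root_.gram, Matrix.det_fin_two_of] at hdet
    linarith
  obtain ⟨P, hP, hPe⟩ := key a.natAbs a (M 0 1) c le_rfl hd
  exact ⟨P, hP, by rw [hM]; exact hPe⟩
end

section
/- There is no even lattice of rank 3 and signature (1,2) whose discriminant group is isomorphic to (ℤ/2ℤ) × (ℤ/2ℤ): for every symmetric 3×3 integer matrix M with even diagonal entries and signature (1,2), the finite abelian group ℤ³/Mℤ³ is not isomorphic to (ℤ/2ℤ)². -/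
open Matrix

private lemma add_self_zmod22 : ∀ x : ZMod 2 × ZMod 2, x + x = 0 := by decide

private lemma even_zsmul_zmod22 {m : ℤ} (h : 2 ∣ m) (x : ZMod 2 × ZMod 2) :
    m • x = 0 := by
  obtain ⟨k, rfl⟩ := h
  rw [mul_zsmul, two_zsmul, add_self_zmod22]

private lemma zsmul_cases_zmod22 (m : ℤ) (x : ZMod 2 × ZMod 2) :
    m • x = 0 ∨ m • x = x := by
  rcases Int.even_or_odd m with ⟨k, hk⟩ | ⟨k, hk⟩
  · exact Or.inl (even_zsmul_zmod22 ⟨k, by omega⟩ x)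
  · right
    subst hk
    rw [add_zsmul, one_zsmul, even_zsmul_zmod22 ⟨k, rfl⟩, zero_add]

private lemma odd_zsmul_zmod22 {m : ℤ} (h : ¬ 2 ∣ m) (x : ZMod 2 × ZMod 2) :
    m • x = x := by
  have hm : m = 2 * ((m - 1) / 2) + 1 := by omega
  rw [hm, add_zsmul, one_zsmul, even_zsmul_zmod22 ⟨_, rfl⟩, zero_add]

private lemma eq_of_add_eq_zero_zmod22 {x y : ZMod 2 × ZMod 2} (h : x + y = 0) : x = y := by
  revert h; revert y; revert x; decide

/-- If every value of a surjective map to `ZMod 2 × ZMod 2` is an integer multiple of a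
single element, we get a contradiction. -/
private lemma aux_mul (φ : (Fin 3 → ℤ) → ZMod 2 × ZMod 2) (t : ZMod 2 × ZMod 2)
    (hmul : ∀ v, ∃ m : ℤ, φ v = m • t) (hsurj : Function.Surjective φ) : False := by
  obtain ⟨v, hv⟩ := hsurj (1, 0)
  obtain ⟨w, hw⟩ := hsurj (0, 1)
  obtain ⟨m, hm⟩ := hmul v
  obtain ⟨n, hn⟩ := hmul w
  rw [hv] at hm
  rw [hw] at hn
  rcases zsmul_cases_zmod22 m t with h | h
  · rw [h] at hm; exact absurd hm (by decide)
  rcases zsmul_cases_zmod22 n t with h' | h'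
  · rw [h'] at hn; exact absurd hn (by decide)
  rw [h] at hm; rw [h'] at hn
  exact absurd (hm.trans hn.symm) (by decide)

/-- There is no even lattice of rank 3 and signature (1,2) whose discriminant group
is isomorphic to (ℤ/2ℤ) × (ℤ/2ℤ). -/
theorem statement_15 (M : Matrix (Fin 3) (Fin 3) ℤ)
    (hsymm : M.IsSymm)
    (heven : ∀ i, 2 ∣ M i i)
    (hH : (M.map (Int.cast : ℤ → ℝ)).IsHermitian)
    (hpos : (Finset.univ.filter fun i => 0 < hH.eigenvalues i).card = 1)
    (hneg : (Finset.univ.filter fun i => hH.eigenvalues i < 0).card = 2) :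
    ¬ Nonempty (((Fin 3 → ℤ) ⧸ LinearMap.range M.mulVecLin) ≃+ (ZMod 2 × ZMod 2)) := by
  rintro ⟨e⟩
  have h10 : M 1 0 = M 0 1 := hsymm.apply 0 1
  have h20 : M 2 0 = M 0 2 := hsymm.apply 0 2
  have h21 : M 2 1 = M 1 2 := hsymm.apply 1 2
  set φ : (Fin 3 → ℤ) → ZMod 2 × ZMod 2 :=
    fun v => e (Submodule.Quotient.mk v) with hφ
  have hsurj : Function.Surjective φ :=
    e.surjective.comp (Submodule.Quotient.mk_surjective _)
  have hker : ∀ v, φ v = 0 → v ∈ LinearMap.range M.mulVecLin := by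
    intro v hv
    have h0 : e (Submodule.Quotient.mk v) = e 0 := by rw [map_zero]; exact hv
    have := e.injective h0
    rwa [Submodule.Quotient.mk_eq_zero] at this
  set g : Fin 3 → ZMod 2 × ZMod 2 := fun i => φ (Pi.single i 1) with hg
  have hlin : ∀ v : Fin 3 → ℤ, φ v = v 0 • g 0 + v 1 • g 1 + v 2 • g 2 := by
    intro v
    have hv : v = v 0 • Pi.single (0 : Fin 3) (1 : ℤ) + v 1 • Pi.single 1 1
        + v 2 • Pi.single 2 1 := by
      ext i; fin_cases i <;> simp
    show e (Submodule.Quotient.mk v) = _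
    conv_lhs => rw [hv]
    rw [Submodule.Quotient.mk_add, Submodule.Quotient.mk_add,
      Submodule.Quotient.mk_smul, Submodule.Quotient.mk_smul, Submodule.Quotient.mk_smul,
      map_add, map_add, map_zsmul, map_zsmul, map_zsmul]
  have hcol : ∀ j, M 0 j • g 0 + M 1 j • g 1 + M 2 j • g 2 = 0 := by
    intro j
    have hmem : (fun i => M i j) ∈ LinearMap.range M.mulVecLin := by
      refine ⟨Pi.single j 1, ?_⟩
      ext i
      simp [Matrix.mulVecLin_apply, Matrix.mulVec_single]
    have h0 : φ (fun i => M i j) = 0 := by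
      show e (Submodule.Quotient.mk _) = 0
      rw [(Submodule.Quotient.mk_eq_zero _).mpr hmem, map_zero]
    rw [hlin] at h0
    exact h0
  have hc0 := hcol 0
  have hc1 := hcol 1
  have hc2 := hcol 2
  rw [even_zsmul_zmod22 (heven 0), zero_add, h10, h20] at hc0
  rw [even_zsmul_zmod22 (heven 1), add_zero, h21] at hc1
  rw [even_zsmul_zmod22 (heven 2), add_zero] at hc2
  -- hc0 : M 0 1 • g 1 + M 0 2 • g 2 = 0
  -- hc1 : M 0 1 • g 0 + M 1 2 • g 2 = 0
  -- hc2 : M 0 2 • g 0 + M 1 2 • g 1 = 0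
  by_cases ha : (2 : ℤ) ∣ M 0 1
  · by_cases hb : (2 : ℤ) ∣ M 0 2
    · by_cases hc : (2 : ℤ) ∣ M 1 2
      · -- all entries even
        have hall : ∀ i j, 2 ∣ M i j := by
          intro i j
          fin_cases i <;> fin_cases j
          exacts [heven 0, ha, hb, h10.symm ▸ ha, heven 1, hc,
            h20.symm ▸ hb, h21.symm ▸ hc, heven 2]
        have hrange : ∀ v, φ v = 0 → ∀ i, 2 ∣ v i := by
          intro v hv i
          obtain ⟨u, hu⟩ := hker v hv
          have hvi : v i = M i 0 * u 0 + M i 1 * u 1 + M i 2 * u 2 := by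
            rw [← hu]
            simp [Matrix.mulVecLin_apply, Matrix.mulVec, dotProduct, Fin.sum_univ_three]
          rw [hvi]
          exact dvd_add (dvd_add ((hall i 0).mul_right _) ((hall i 1).mul_right _))
            ((hall i 2).mul_right _)
        have hdep : g 0 = 0 ∨ g 1 = 0 ∨ g 2 = 0 ∨ g 0 + g 1 = 0 ∨ g 0 + g 2 = 0 ∨
            g 1 + g 2 = 0 ∨ g 0 + g 1 + g 2 = 0 := by
          have : ∀ x y z : ZMod 2 × ZMod 2, x = 0 ∨ y = 0 ∨ z = 0 ∨ x + y = 0 ∨ x + z = 0 ∨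
              y + z = 0 ∨ x + y + z = 0 := by decide
          exact this (g 0) (g 1) (g 2)
        rcases hdep with h | h | h | h | h | h | h
        · have h2 := hrange ![1, 0, 0] (by rw [hlin]; simp [h]) 0
          norm_num at h2
        · have h2 := hrange ![0, 1, 0] (by rw [hlin]; simp [h]) 1
          norm_num at h2
        · have h2 := hrange ![0, 0, 1] (by rw [hlin]; simp [h]) 2
          norm_num [show ![(0:ℤ), 0, 1] 2 = 1 from rfl] at h2
        · have h2 := hrange ![1, 1, 0] (by rw [hlin]; simpa using h) 0
          norm_num at h2
        · have h2 := hrange ![1, 0, 1] (by rw [hlin]; simpa using h) 0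
          norm_num at h2
        · have h2 := hrange ![0, 1, 1] (by rw [hlin]; simpa using h) 1
          norm_num at h2
        · have h2 := hrange ![1, 1, 1] (by rw [hlin]; simpa using h) 0
          norm_num at h2
      · -- M 1 2 odd, M 0 1 and M 0 2 even : g 1 = 0, g 2 = 0
        have hg2 : g 2 = 0 := by
          have := hc1
          rw [even_zsmul_zmod22 ha, zero_add, odd_zsmul_zmod22 hc] at this
          exact this
        have hg1 : g 1 = 0 := by
          have := hc2
          rw [even_zsmul_zmod22 hb, zero_add, odd_zsmul_zmod22 hc] at this
          exact this
        refine aux_mul φ (g 0) (fun v => ⟨v 0, ?_⟩) hsurj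
        rw [hlin, hg1, hg2, smul_zero, smul_zero, add_zero, add_zero]
    · -- M 0 2 odd, M 0 1 even : g 2 = 0 (from hc0), g 0 = M 1 2 • g 1 (from hc2)
      have hg2 : g 2 = 0 := by
        have := hc0
        rw [even_zsmul_zmod22 ha, zero_add, odd_zsmul_zmod22 hb] at this
        exact this
      have hg0 : g 0 = M 1 2 • g 1 := by
        have := hc2
        rw [odd_zsmul_zmod22 hb] at this
        exact eq_of_add_eq_zero_zmod22 this
      refine aux_mul φ (g 1) (fun v => ⟨v 0 * M 1 2 + v 1, ?_⟩) hsurj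
      rw [hlin, hg0, hg2, smul_zero, add_zero, ← mul_zsmul, ← add_zsmul]
  · -- M 0 1 odd : g 1 = M 0 2 • g 2 (hc0), g 0 = M 1 2 • g 2 (hc1)
    have hg1 : g 1 = M 0 2 • g 2 := by
      have := hc0
      rw [odd_zsmul_zmod22 ha] at this
      exact eq_of_add_eq_zero_zmod22 this
    have hg0 : g 0 = M 1 2 • g 2 := by
      have := hc1
      rw [odd_zsmul_zmod22 ha] at this
      exact eq_of_add_eq_zero_zmod22 this
    refine aux_mul φ (g 2) (fun v => ⟨v 0 * M 1 2 + v 1 * M 0 2 + v 2, ?_⟩) hsurj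
    rw [hlin, hg0, hg1, ← mul_zsmul, ← mul_zsmul, ← add_zsmul, ← add_zsmul]
end

section
/- The even lattices U ⊕ E₈ ⊕ E₇ ⊕ A₁ and U ⊕ E₈ ⊕ D₈ both have rank 18, signature (1,17) and discriminant number 4, yet they are not isometric: there is no P ∈ GL₁₈(ℤ) with Pᵀ M₁ P = M₂, where M₁ and M₂ are the block-diagonal Gram matrices of U ⊕ E₈ ⊕ E₇ ⊕ A₁ and U ⊕ E₈ ⊕ D₈ respectively. In particular, the pair (rank, discriminant number) does not determine an even hyperbolic lattice up to isometry. -/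
open Matrix

/-- Gram matrix of U ⊕ E₈ ⊕ E₇ ⊕ A₁. -/
def gramUE8E7A1 : Matrix (Fin 18) (Fin 18) ℤ :=
  !![0, 1, 0, 0, 0, 0, 0, 0, 0, 0, 0, 0, 0, 0, 0, 0, 0, 0;
    1, 0, 0, 0, 0, 0, 0, 0, 0, 0, 0, 0, 0, 0, 0, 0, 0, 0;
    0, 0, -2, 1, 0, 0, 0, 0, 0, 0, 0, 0, 0, 0, 0, 0, 0, 0;
    0, 0, 1, -2, 1, 0, 0, 0, 0, 0, 0, 0, 0, 0, 0, 0, 0, 0;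
    0, 0, 0, 1, -2, 1, 0, 0, 0, 1, 0, 0, 0, 0, 0, 0, 0, 0;
    0, 0, 0, 0, 1, -2, 1, 0, 0, 0, 0, 0, 0, 0, 0, 0, 0, 0;
    0, 0, 0, 0, 0, 1, -2, 1, 0, 0, 0, 0, 0, 0, 0, 0, 0, 0;
    0, 0, 0, 0, 0, 0, 1, -2, 1, 0, 0, 0, 0, 0, 0, 0, 0, 0;
    0, 0, 0, 0, 0, 0, 0, 1, -2, 0, 0, 0, 0, 0, 0, 0, 0, 0;
    0, 0, 0, 0, 1, 0, 0, 0, 0, -2, 0, 0, 0, 0, 0, 0, 0, 0;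
    0, 0, 0, 0, 0, 0, 0, 0, 0, 0, -2, 1, 0, 0, 0, 0, 0, 0;
    0, 0, 0, 0, 0, 0, 0, 0, 0, 0, 1, -2, 1, 0, 0, 0, 0, 0;
    0, 0, 0, 0, 0, 0, 0, 0, 0, 0, 0, 1, -2, 1, 0, 0, 1, 0;
    0, 0, 0, 0, 0, 0, 0, 0, 0, 0, 0, 0, 1, -2, 1, 0, 0, 0;
    0, 0, 0, 0, 0, 0, 0, 0, 0, 0, 0, 0, 0, 1, -2, 1, 0, 0;
    0, 0, 0, 0, 0, 0, 0, 0, 0, 0, 0, 0, 0, 0, 1, -2, 0, 0;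
    0, 0, 0, 0, 0, 0, 0, 0, 0, 0, 0, 0, 1, 0, 0, 0, -2, 0;
    0, 0, 0, 0, 0, 0, 0, 0, 0, 0, 0, 0, 0, 0, 0, 0, 0, -2]

/-- Gram matrix of U ⊕ E₈ ⊕ D₈. -/
def gramUE8D8 : Matrix (Fin 18) (Fin 18) ℤ :=
  !![0, 1, 0, 0, 0, 0, 0, 0, 0, 0, 0, 0, 0, 0, 0, 0, 0, 0;
    1, 0, 0, 0, 0, 0, 0, 0, 0, 0, 0, 0, 0, 0, 0, 0, 0, 0;
    0, 0, -2, 1, 0, 0, 0, 0, 0, 0, 0, 0, 0, 0, 0, 0, 0, 0;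
    0, 0, 1, -2, 1, 0, 0, 0, 0, 0, 0, 0, 0, 0, 0, 0, 0, 0;
    0, 0, 0, 1, -2, 1, 0, 0, 0, 1, 0, 0, 0, 0, 0, 0, 0, 0;
    0, 0, 0, 0, 1, -2, 1, 0, 0, 0, 0, 0, 0, 0, 0, 0, 0, 0;
    0, 0, 0, 0, 0, 1, -2, 1, 0, 0, 0, 0, 0, 0, 0, 0, 0, 0;
    0, 0, 0, 0, 0, 0, 1, -2, 1, 0, 0, 0, 0, 0, 0, 0, 0, 0;
    0, 0, 0, 0, 0, 0, 0, 1, -2, 0, 0, 0, 0, 0, 0, 0, 0, 0;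
    0, 0, 0, 0, 1, 0, 0, 0, 0, -2, 0, 0, 0, 0, 0, 0, 0, 0;
    0, 0, 0, 0, 0, 0, 0, 0, 0, 0, -2, 1, 0, 0, 0, 0, 0, 0;
    0, 0, 0, 0, 0, 0, 0, 0, 0, 0, 1, -2, 1, 0, 0, 0, 0, 0;
    0, 0, 0, 0, 0, 0, 0, 0, 0, 0, 0, 1, -2, 1, 0, 0, 0, 0;
    0, 0, 0, 0, 0, 0, 0, 0, 0, 0, 0, 0, 1, -2, 1, 0, 0, 0;
    0, 0, 0, 0, 0, 0, 0, 0, 0, 0, 0, 0, 0, 1, -2, 1, 0, 0;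
    0, 0, 0, 0, 0, 0, 0, 0, 0, 0, 0, 0, 0, 0, 1, -2, 1, 1;
    0, 0, 0, 0, 0, 0, 0, 0, 0, 0, 0, 0, 0, 0, 0, 1, -2, 0;
    0, 0, 0, 0, 0, 0, 0, 0, 0, 0, 0, 0, 0, 0, 0, 1, 0, -2]

namespace S16
set_option maxRecDepth 4000
set_option maxHeartbeats 12000000


/-- quadratic form transforms under congruence -/
lemma quad_congr {n : ℕ} {R : Type*} [CommRing R] (A T : Matrix (Fin n) (Fin n) R)
    (c : Fin n → R) :
    c ⬝ᵥ ((Tᵀ * A * T) *ᵥ c) = (T *ᵥ c) ⬝ᵥ (A *ᵥ (T *ᵥ c)) := by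
  rw [mul_assoc, ← mulVec_mulVec, dotProduct_mulVec c Tᵀ, vecMul_transpose, mulVec_mulVec]

lemma sandwich {m n : ℕ} {R : Type*} [CommRing R] (E : Matrix (Fin m) (Fin n) R)
    (B : Matrix (Fin m) (Fin m) R) (v : Fin n → R) :
    v ⬝ᵥ ((Eᵀ * B * E) *ᵥ v) = (E *ᵥ v) ⬝ᵥ (B *ᵥ (E *ᵥ v)) := by
  rw [← mulVec_mulVec, ← mulVec_mulVec, dotProduct_mulVec v Eᵀ, vecMul_transpose]

lemma symm_dot {n : ℕ} {R : Type*} [CommRing R] (B : Matrix (Fin n) (Fin n) R)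
    (r s : Fin n → R) (hB : Bᵀ = B) :
    s ⬝ᵥ (B *ᵥ r) = r ⬝ᵥ (B *ᵥ s) := by
  calc s ⬝ᵥ (B *ᵥ r) = (B *ᵥ r) ⬝ᵥ s := dotProduct_comm _ _
    _ = (r ᵥ* Bᵀ) ⬝ᵥ s := by rw [vecMul_transpose]
    _ = r ⬝ᵥ (Bᵀ *ᵥ s) := (dotProduct_mulVec r Bᵀ s).symm
    _ = r ⬝ᵥ (B *ᵥ s) := by rw [hB]

lemma LLT_quad {n : ℕ} (L : Matrix (Fin n) (Fin n) (ZMod 4)) (v : Fin n → ZMod 4) :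
    v ⬝ᵥ ((((2 : ZMod 4) • L) + (2 : ZMod 4) • Lᵀ) *ᵥ v) = 0 := by
  have h : v ⬝ᵥ (Lᵀ *ᵥ v) = v ⬝ᵥ (L *ᵥ v) := by
    rw [dotProduct_mulVec v Lᵀ v, vecMul_transpose, dotProduct_comm]
  simp only [add_mulVec, dotProduct_add, smul_mulVec, dotProduct_smul, smul_eq_mul]
  rw [h]
  have h2 : (2 : ZMod 4) + 2 = 0 := by decide
  linear_combination (v ⬝ᵥ (L *ᵥ v)) * h2

lemma quad_shift {n : ℕ} (B : Matrix (Fin n) (Fin n) (ZMod 4)) (hB : Bᵀ = B)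
    (r s : Fin n → ZMod 4) :
    (r + (2 : ZMod 4) • s) ⬝ᵥ (B *ᵥ (r + (2 : ZMod 4) • s)) = r ⬝ᵥ (B *ᵥ r) := by
  simp only [mulVec_add, dotProduct_add, add_dotProduct, mulVec_smul, dotProduct_smul,
    smul_dotProduct, smul_eq_mul]
  rw [symm_dot B r s hB]
  have h2 : (2 : ZMod 4) + 2 = 0 := by decide
  have h4 : (4 : ZMod 4) = 0 := by decide
  linear_combination (r ⬝ᵥ (B *ᵥ s)) * h2 + (s ⬝ᵥ (B *ᵥ s)) * h4

lemma cast_quad {n : ℕ} (K : Matrix (Fin n) (Fin n) ℤ) (u : Fin n → ℤ) :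
    (fun i => ((u i : ZMod 4))) ⬝ᵥ ((K.map (Int.cast : ℤ → ZMod 4)) *ᵥ fun i => ((u i : ZMod 4)))
      = ((u ⬝ᵥ (K *ᵥ u) : ℤ) : ZMod 4) := by
  simp only [dotProduct, mulVec, Matrix.map_apply]
  push_cast
  rfl

/-- subspace on which the form is positive definite, of dimension ≥ #pos entries -/
lemma exists_posdef_subspace {n : ℕ} (A T : Matrix (Fin n) (Fin n) ℝ) (e : Fin n → ℝ)
    (hT : IsUnit T.det) (hc : Tᵀ * A * T = diagonal e) (p : Fin n → Prop) [DecidablePred p]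
    (hp : ∀ i, p i → 0 < e i) :
    ∃ W : Submodule ℝ (Fin n → ℝ),
      (Finset.univ.filter fun i => p i).card ≤ Module.finrank ℝ W ∧
      ∀ x ∈ W, x ≠ 0 → 0 < x ⬝ᵥ (A *ᵥ x) := by
  have hi : Invertible T := T.invertibleOfIsUnitDet hT
  set ψ : (Fin n → ℝ) →ₗ[ℝ] ({i : Fin n // ¬ p i} → ℝ) :=
    (LinearMap.pi fun i : {i : Fin n // ¬ p i} =>
      LinearMap.proj (R := ℝ) (φ := fun _ : Fin n => ℝ) i.1).comp (⅟T).mulVecLin with hψ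
  have hker : ∀ x, x ∈ LinearMap.ker ψ ↔ ∀ i : Fin n, ¬ p i → (⅟T *ᵥ x) i = 0 := by
    intro x
    simp [hψ, LinearMap.mem_ker, funext_iff, Subtype.forall]
  refine ⟨LinearMap.ker ψ, ?_, ?_⟩
  · have h1 := LinearMap.finrank_range_add_finrank_ker ψ
    have h2 : Module.finrank ℝ (LinearMap.range ψ) ≤ (Finset.univ.filter fun i => ¬ p i).card := by
      have h3 := Submodule.finrank_le (LinearMap.range ψ)
      rwa [Module.finrank_fintype_fun_eq_card, Fintype.card_subtype] at h3
    have h3 : Module.finrank ℝ (Fin n → ℝ) = n := by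
      rw [Module.finrank_fintype_fun_eq_card, Fintype.card_fin]
    have h4 : (Finset.univ.filter fun i => p i).card
        + (Finset.univ.filter fun i => ¬ p i).card = n := by
      rw [Finset.card_filter_add_card_filter_not, Finset.card_univ, Fintype.card_fin]
    omega
  · intro x hx hx0
    have hxmem := (hker x).mp hx
    have hxc : x = T *ᵥ (⅟T *ᵥ x) := by rw [mulVec_mulVec, mul_invOf_self, one_mulVec]
    set c := ⅟T *ᵥ x with hcdef
    have hcne : c ≠ 0 := by
      intro h0
      apply hx0
      rw [hxc, h0, mulVec_zero]
    have hval : x ⬝ᵥ (A *ᵥ x) = ∑ i, c i * (e i * c i) := by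
      conv_lhs => rw [hxc]
      rw [← quad_congr, hc]
      simp [dotProduct, mulVec_diagonal]
    rw [hval]
    obtain ⟨i0, hi0⟩ := Function.ne_iff.mp hcne
    have hpi0 : p i0 := by
      by_contra hnp
      exact hi0 (hxmem i0 hnp)
    apply Finset.sum_pos'
    · intro i _
      by_cases hpi : p i
      · have h5 : c i * (e i * c i) = e i * (c i * c i) := by ring
        rw [h5]
        exact mul_nonneg (hp i hpi).le (mul_self_nonneg _)
      · rw [hxmem i hpi]
        simp
    · refine ⟨i0, Finset.mem_univ _, ?_⟩
      have h5 : c i0 * (e i0 * c i0) = e i0 * (c i0 * c i0) := by ring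
      rw [h5]
      exact mul_pos (hp i0 hpi0) (mul_self_pos.mpr hi0)

lemma filter_card_add_le {n : ℕ} (A T₁ T₂ : Matrix (Fin n) (Fin n) ℝ) (e₁ e₂ : Fin n → ℝ)
    (h₁ : IsUnit T₁.det) (h₂ : IsUnit T₂.det)
    (hc₁ : T₁ᵀ * A * T₁ = diagonal e₁) (hc₂ : T₂ᵀ * A * T₂ = diagonal e₂) :
    (Finset.univ.filter fun i => 0 < e₁ i).card
      + (Finset.univ.filter fun i => e₂ i < 0).card ≤ n := by
  obtain ⟨W₁, hW₁, hq₁⟩ :=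
    exists_posdef_subspace A T₁ e₁ h₁ hc₁ (fun i => 0 < e₁ i) (fun i h => h)
  have hc₂' : T₂ᵀ * (-A) * T₂ = diagonal (-e₂) := by
    rw [Matrix.mul_neg, Matrix.neg_mul, hc₂]
    simp [Matrix.diagonal_neg]
  obtain ⟨W₂, hW₂, hq₂⟩ :=
    exists_posdef_subspace (-A) T₂ (-e₂) h₂ hc₂' (fun i => e₂ i < 0)
      (fun i h => by simpa using h)
  have hdisj : W₁ ⊓ W₂ = ⊥ := by
    rw [Submodule.eq_bot_iff]
    rintro x ⟨hx1, hx2⟩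
    by_contra hx0
    have hp1 := hq₁ x hx1 hx0
    have hp2 := hq₂ x hx2 hx0
    rw [neg_mulVec, dotProduct_neg] at hp2
    linarith
  have hsum := Submodule.finrank_sup_add_finrank_inf_eq W₁ W₂
  have hle := Submodule.finrank_le (W₁ ⊔ W₂)
  rw [hdisj, finrank_bot] at hsum
  rw [Module.finrank_fintype_fun_eq_card, Fintype.card_fin] at hle
  omega

lemma eigen_card {n : ℕ} (A S : Matrix (Fin n) (Fin n) ℝ) (hA : A.IsHermitian)
    (d : Fin n → ℝ) (hS : IsUnit S.det) (hcong : Sᵀ * A * S = diagonal d)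
    (hd : ∀ i, d i ≠ 0) (hdet : A.det ≠ 0) :
    (Finset.univ.filter fun i => 0 < hA.eigenvalues i).card
        = (Finset.univ.filter fun i => 0 < d i).card ∧
    (Finset.univ.filter fun i => hA.eigenvalues i < 0).card
        = (Finset.univ.filter fun i => d i < 0).card := by
  set U : Matrix (Fin n) (Fin n) ℝ := (hA.eigenvectorUnitary : Matrix (Fin n) (Fin n) ℝ) with hU
  have hUdet : IsUnit U.det := UnitaryGroup.det_isUnit _
  have hUc : Uᵀ * A * U = diagonal hA.eigenvalues := by
    have h := hA.conjStarAlgAut_star_eigenvectorUnitary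
    simp only [Unitary.conjStarAlgAut_apply, Unitary.coe_star, star_star] at h
    rw [star_eq_conjTranspose, conjTranspose_eq_transpose_of_trivial] at h
    simpa [RCLike.ofReal_real_eq_id] using h
  have hev : ∀ i, hA.eigenvalues i ≠ 0 := by
    intro i h0
    apply hdet
    rw [hA.det_eq_prod_eigenvalues]
    exact Finset.prod_eq_zero (Finset.mem_univ i) (by simp [h0])
  have key1 := filter_card_add_le A S U d hA.eigenvalues hS hUdet hcong hUc
  have key2 := filter_card_add_le A U S hA.eigenvalues d hUdet hS hUc hcong
  have hsplit : ∀ (e : Fin n → ℝ), (∀ i, e i ≠ 0) →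
      (Finset.univ.filter fun i => 0 < e i).card
        + (Finset.univ.filter fun i => e i < 0).card = n := by
    intro e he
    have heq : (Finset.univ.filter fun i => e i < 0)
        = (Finset.univ.filter fun i => ¬ 0 < e i) := by
      apply Finset.filter_congr
      intro i _
      simp only [not_lt, eq_iff_iff]
      exact ⟨le_of_lt, fun h => lt_of_le_of_ne h (he i)⟩
    rw [heq, Finset.card_filter_add_card_filter_not, Finset.card_univ, Fintype.card_fin]
  have hs1 := hsplit hA.eigenvalues hev
  have hs2 := hsplit d hd
  omega


def K1 : Matrix (Fin 18) (Fin 18) ℤ :=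
  !![0, 2, 0, 0, 0, 0, 0, 0, 0, 0, 0, 0, 0, 0, 0, 0, 0, 0;
    2, 0, 0, 0, 0, 0, 0, 0, 0, 0, 0, 0, 0, 0, 0, 0, 0, 0;
    0, 0, -8, -14, -20, -16, -12, -8, -4, -10, 0, 0, 0, 0, 0, 0, 0, 0;
    0, 0, -14, -28, -40, -32, -24, -16, -8, -20, 0, 0, 0, 0, 0, 0, 0, 0;
    0, 0, -20, -40, -60, -48, -36, -24, -12, -30, 0, 0, 0, 0, 0, 0, 0, 0;
    0, 0, -16, -32, -48, -40, -30, -20, -10, -24, 0, 0, 0, 0, 0, 0, 0, 0;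
    0, 0, -12, -24, -36, -30, -24, -16, -8, -18, 0, 0, 0, 0, 0, 0, 0, 0;
    0, 0, -8, -16, -24, -20, -16, -12, -6, -12, 0, 0, 0, 0, 0, 0, 0, 0;
    0, 0, -4, -8, -12, -10, -8, -6, -4, -6, 0, 0, 0, 0, 0, 0, 0, 0;
    0, 0, -10, -20, -30, -24, -18, -12, -6, -16, 0, 0, 0, 0, 0, 0, 0, 0;
    0, 0, 0, 0, 0, 0, 0, 0, 0, 0, -4, -6, -8, -6, -4, -2, -4, 0;
    0, 0, 0, 0, 0, 0, 0, 0, 0, 0, -6, -12, -16, -12, -8, -4, -8, 0;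
    0, 0, 0, 0, 0, 0, 0, 0, 0, 0, -8, -16, -24, -18, -12, -6, -12, 0;
    0, 0, 0, 0, 0, 0, 0, 0, 0, 0, -6, -12, -18, -15, -10, -5, -9, 0;
    0, 0, 0, 0, 0, 0, 0, 0, 0, 0, -4, -8, -12, -10, -8, -4, -6, 0;
    0, 0, 0, 0, 0, 0, 0, 0, 0, 0, -2, -4, -6, -5, -4, -3, -3, 0;
    0, 0, 0, 0, 0, 0, 0, 0, 0, 0, -4, -8, -12, -9, -6, -3, -7, 0;
    0, 0, 0, 0, 0, 0, 0, 0, 0, 0, 0, 0, 0, 0, 0, 0, 0, -1]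

def K2 : Matrix (Fin 18) (Fin 18) ℤ :=
  !![0, 2, 0, 0, 0, 0, 0, 0, 0, 0, 0, 0, 0, 0, 0, 0, 0, 0;
    2, 0, 0, 0, 0, 0, 0, 0, 0, 0, 0, 0, 0, 0, 0, 0, 0, 0;
    0, 0, -8, -14, -20, -16, -12, -8, -4, -10, 0, 0, 0, 0, 0, 0, 0, 0;
    0, 0, -14, -28, -40, -32, -24, -16, -8, -20, 0, 0, 0, 0, 0, 0, 0, 0;
    0, 0, -20, -40, -60, -48, -36, -24, -12, -30, 0, 0, 0, 0, 0, 0, 0, 0;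
    0, 0, -16, -32, -48, -40, -30, -20, -10, -24, 0, 0, 0, 0, 0, 0, 0, 0;
    0, 0, -12, -24, -36, -30, -24, -16, -8, -18, 0, 0, 0, 0, 0, 0, 0, 0;
    0, 0, -8, -16, -24, -20, -16, -12, -6, -12, 0, 0, 0, 0, 0, 0, 0, 0;
    0, 0, -4, -8, -12, -10, -8, -6, -4, -6, 0, 0, 0, 0, 0, 0, 0, 0;
    0, 0, -10, -20, -30, -24, -18, -12, -6, -16, 0, 0, 0, 0, 0, 0, 0, 0;
    0, 0, 0, 0, 0, 0, 0, 0, 0, 0, -2, -2, -2, -2, -2, -2, -1, -1;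
    0, 0, 0, 0, 0, 0, 0, 0, 0, 0, -2, -4, -4, -4, -4, -4, -2, -2;
    0, 0, 0, 0, 0, 0, 0, 0, 0, 0, -2, -4, -6, -6, -6, -6, -3, -3;
    0, 0, 0, 0, 0, 0, 0, 0, 0, 0, -2, -4, -6, -8, -8, -8, -4, -4;
    0, 0, 0, 0, 0, 0, 0, 0, 0, 0, -2, -4, -6, -8, -10, -10, -5, -5;
    0, 0, 0, 0, 0, 0, 0, 0, 0, 0, -2, -4, -6, -8, -10, -12, -6, -6;
    0, 0, 0, 0, 0, 0, 0, 0, 0, 0, -1, -2, -3, -4, -5, -6, -4, -3;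
    0, 0, 0, 0, 0, 0, 0, 0, 0, 0, -1, -2, -3, -4, -5, -6, -3, -4]

def S1 : Matrix (Fin 18) (Fin 18) ℤ :=
  !![1, -1, 0, 0, 0, 0, 0, 0, 0, 0, 0, 0, 0, 0, 0, 0, 0, 0;
    1, 1, 0, 0, 0, 0, 0, 0, 0, 0, 0, 0, 0, 0, 0, 0, 0, 0;
    0, 0, 1, 1, 1, 1, 1, 1, 1, 5, 0, 0, 0, 0, 0, 0, 0, 0;
    0, 0, 0, 2, 2, 2, 2, 2, 2, 10, 0, 0, 0, 0, 0, 0, 0, 0;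
    0, 0, 0, 0, 3, 3, 3, 3, 3, 15, 0, 0, 0, 0, 0, 0, 0, 0;
    0, 0, 0, 0, 0, 4, 4, 4, 4, 12, 0, 0, 0, 0, 0, 0, 0, 0;
    0, 0, 0, 0, 0, 0, 5, 5, 5, 9, 0, 0, 0, 0, 0, 0, 0, 0;
    0, 0, 0, 0, 0, 0, 0, 6, 6, 6, 0, 0, 0, 0, 0, 0, 0, 0;
    0, 0, 0, 0, 0, 0, 0, 0, 7, 3, 0, 0, 0, 0, 0, 0, 0, 0;
    0, 0, 0, 0, 0, 0, 0, 0, 0, 8, 0, 0, 0, 0, 0, 0, 0, 0;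
    0, 0, 0, 0, 0, 0, 0, 0, 0, 0, 1, 1, 1, 1, 1, 1, 4, 0;
    0, 0, 0, 0, 0, 0, 0, 0, 0, 0, 0, 2, 2, 2, 2, 2, 8, 0;
    0, 0, 0, 0, 0, 0, 0, 0, 0, 0, 0, 0, 3, 3, 3, 3, 12, 0;
    0, 0, 0, 0, 0, 0, 0, 0, 0, 0, 0, 0, 0, 4, 4, 4, 9, 0;
    0, 0, 0, 0, 0, 0, 0, 0, 0, 0, 0, 0, 0, 0, 5, 5, 6, 0;
    0, 0, 0, 0, 0, 0, 0, 0, 0, 0, 0, 0, 0, 0, 0, 6, 3, 0;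
    0, 0, 0, 0, 0, 0, 0, 0, 0, 0, 0, 0, 0, 0, 0, 0, 7, 0;
    0, 0, 0, 0, 0, 0, 0, 0, 0, 0, 0, 0, 0, 0, 0, 0, 0, 1]

def S2 : Matrix (Fin 18) (Fin 18) ℤ :=
  !![1, -1, 0, 0, 0, 0, 0, 0, 0, 0, 0, 0, 0, 0, 0, 0, 0, 0;
    1, 1, 0, 0, 0, 0, 0, 0, 0, 0, 0, 0, 0, 0, 0, 0, 0, 0;
    0, 0, 1, 1, 1, 1, 1, 1, 1, 5, 0, 0, 0, 0, 0, 0, 0, 0;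
    0, 0, 0, 2, 2, 2, 2, 2, 2, 10, 0, 0, 0, 0, 0, 0, 0, 0;
    0, 0, 0, 0, 3, 3, 3, 3, 3, 15, 0, 0, 0, 0, 0, 0, 0, 0;
    0, 0, 0, 0, 0, 4, 4, 4, 4, 12, 0, 0, 0, 0, 0, 0, 0, 0;
    0, 0, 0, 0, 0, 0, 5, 5, 5, 9, 0, 0, 0, 0, 0, 0, 0, 0;
    0, 0, 0, 0, 0, 0, 0, 6, 6, 6, 0, 0, 0, 0, 0, 0, 0, 0;
    0, 0, 0, 0, 0, 0, 0, 0, 7, 3, 0, 0, 0, 0, 0, 0, 0, 0;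
    0, 0, 0, 0, 0, 0, 0, 0, 0, 8, 0, 0, 0, 0, 0, 0, 0, 0;
    0, 0, 0, 0, 0, 0, 0, 0, 0, 0, 1, 1, 1, 1, 1, 1, 1, 1;
    0, 0, 0, 0, 0, 0, 0, 0, 0, 0, 0, 2, 2, 2, 2, 2, 2, 2;
    0, 0, 0, 0, 0, 0, 0, 0, 0, 0, 0, 0, 3, 3, 3, 3, 3, 3;
    0, 0, 0, 0, 0, 0, 0, 0, 0, 0, 0, 0, 0, 4, 4, 4, 4, 4;
    0, 0, 0, 0, 0, 0, 0, 0, 0, 0, 0, 0, 0, 0, 5, 5, 5, 5;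
    0, 0, 0, 0, 0, 0, 0, 0, 0, 0, 0, 0, 0, 0, 0, 6, 6, 6;
    0, 0, 0, 0, 0, 0, 0, 0, 0, 0, 0, 0, 0, 0, 0, 0, 7, 3;
    0, 0, 0, 0, 0, 0, 0, 0, 0, 0, 0, 0, 0, 0, 0, 0, 0, 4]

def d1 : Fin 18 → ℤ := ![2, -2, -2, -6, -12, -20, -30, -42, -56, -8, -2, -6, -12, -20, -30, -42, -14, -2]

def d2 : Fin 18 → ℤ := ![2, -2, -2, -6, -12, -20, -30, -42, -56, -8, -2, -6, -12, -20, -30, -42, -56, -8]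

def LL1 : Matrix (Fin 18) (Fin 18) ℤ :=
  !![1, 0, 0, 0, 0, 0, 0, 0, 0, 0, 0, 0, 0, 0, 0, 0, 0, 0;
    0, 1, 0, 0, 0, 0, 0, 0, 0, 0, 0, 0, 0, 0, 0, 0, 0, 0;
    0, 0, 1, 0, 0, 0, 0, 0, 0, 0, 0, 0, 0, 0, 0, 0, 0, 0;
    0, 0, -1, -2, 0, 0, 0, 0, 0, 0, 0, 0, 0, 0, 0, 0, 0, 0;
    0, 0, 1, 2, 3, 0, 0, 0, 0, 0, 0, 0, 0, 0, 0, 0, 0, 0;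
    0, 0, -1, -2, -3, -4, 0, 0, 0, 0, 0, 0, 0, 0, 0, 0, 0, 0;
    0, 0, 1, 2, 3, 4, 5, 0, 0, 0, 0, 0, 0, 0, 0, 0, 0, 0;
    0, 0, -1, -2, -3, -4, -5, -6, 0, 0, 0, 0, 0, 0, 0, 0, 0, 0;
    0, 0, 1, 2, 3, 4, 5, 6, 7, 0, 0, 0, 0, 0, 0, 0, 0, 0;
    0, 0, -4200, -8400, -12600, -10080, -7560, -5040, -2520, -6720, 0, 0, 0, 0, 0, 0, 0, 0;
    0, 0, 0, 0, 0, 0, 0, 0, 0, 0, 1, 0, 0, 0, 0, 0, 0, 0;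
    0, 0, 0, 0, 0, 0, 0, 0, 0, 0, -1, -2, 0, 0, 0, 0, 0, 0;
    0, 0, 0, 0, 0, 0, 0, 0, 0, 0, 1, 2, 3, 0, 0, 0, 0, 0;
    0, 0, 0, 0, 0, 0, 0, 0, 0, 0, -1, -2, -3, -4, 0, 0, 0, 0;
    0, 0, 0, 0, 0, 0, 0, 0, 0, 0, 1, 2, 3, 4, 5, 0, 0, 0;
    0, 0, 0, 0, 0, 0, 0, 0, 0, 0, -1, -2, -3, -4, -5, -6, 0, 0;
    0, 0, 0, 0, 0, 0, 0, 0, 0, 0, 480, 960, 1440, 1080, 720, 360, 840, 0;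
    0, 0, 0, 0, 0, 0, 0, 0, 0, 0, 0, 0, 0, 0, 0, 0, 0, 1]

def RR1 : Matrix (Fin 18) (Fin 18) ℤ :=
  !![1, 0, 0, 0, 0, 0, 0, 0, 0, 0, 0, 0, 0, 0, 0, 0, 0, 0;
    0, 1, 0, 0, 0, 0, 0, 0, 0, 0, 0, 0, 0, 0, 0, 0, 0, 0;
    0, 0, -2, 1, 0, 0, 0, 0, 0, 0, 0, 0, 0, 0, 0, 0, 0, 0;
    0, 0, 0, 3, -2, 0, 0, 0, 0, 0, 0, 0, 0, 0, 0, 0, 0, 0;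
    0, 0, 0, 0, -4, 3, 0, 0, 0, 3, 0, 0, 0, 0, 0, 0, 0, 0;
    0, 0, 0, 0, 0, 5, -4, 0, 0, -3, 0, 0, 0, 0, 0, 0, 0, 0;
    0, 0, 0, 0, 0, 0, -6, 5, 0, 3, 0, 0, 0, 0, 0, 0, 0, 0;
    0, 0, 0, 0, 0, 0, 0, 7, -6, -3, 0, 0, 0, 0, 0, 0, 0, 0;
    0, 0, 0, 0, 0, 0, 0, 0, -8, 3, 0, 0, 0, 0, 0, 0, 0, 0;
    0, 0, 0, 0, 0, 0, 0, 0, 0, 840, 0, 0, 0, 0, 0, 0, 0, 0;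
    0, 0, 0, 0, 0, 0, 0, 0, 0, 0, -2, 1, 0, 0, 0, 0, 0, 0;
    0, 0, 0, 0, 0, 0, 0, 0, 0, 0, 0, 3, -2, 0, 0, 0, 0, 0;
    0, 0, 0, 0, 0, 0, 0, 0, 0, 0, 0, 0, -4, 3, 0, 0, 3, 0;
    0, 0, 0, 0, 0, 0, 0, 0, 0, 0, 0, 0, 0, 5, -4, 0, -3, 0;
    0, 0, 0, 0, 0, 0, 0, 0, 0, 0, 0, 0, 0, 0, -6, 5, 3, 0;
    0, 0, 0, 0, 0, 0, 0, 0, 0, 0, 0, 0, 0, 0, 0, 7, -3, 0;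
    0, 0, 0, 0, 0, 0, 0, 0, 0, 0, 0, 0, 0, 0, 0, 0, -240, 0;
    0, 0, 0, 0, 0, 0, 0, 0, 0, 0, 0, 0, 0, 0, 0, 0, 0, -2]

def LL2 : Matrix (Fin 18) (Fin 18) ℤ :=
  !![1, 0, 0, 0, 0, 0, 0, 0, 0, 0, 0, 0, 0, 0, 0, 0, 0, 0;
    0, 1, 0, 0, 0, 0, 0, 0, 0, 0, 0, 0, 0, 0, 0, 0, 0, 0;
    0, 0, 1, 0, 0, 0, 0, 0, 0, 0, 0, 0, 0, 0, 0, 0, 0, 0;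
    0, 0, -1, -2, 0, 0, 0, 0, 0, 0, 0, 0, 0, 0, 0, 0, 0, 0;
    0, 0, 1, 2, 3, 0, 0, 0, 0, 0, 0, 0, 0, 0, 0, 0, 0, 0;
    0, 0, -1, -2, -3, -4, 0, 0, 0, 0, 0, 0, 0, 0, 0, 0, 0, 0;
    0, 0, 1, 2, 3, 4, 5, 0, 0, 0, 0, 0, 0, 0, 0, 0, 0, 0;
    0, 0, -1, -2, -3, -4, -5, -6, 0, 0, 0, 0, 0, 0, 0, 0, 0, 0;
    0, 0, 1, 2, 3, 4, 5, 6, 7, 0, 0, 0, 0, 0, 0, 0, 0, 0;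
    0, 0, -4200, -8400, -12600, -10080, -7560, -5040, -2520, -6720, 0, 0, 0, 0, 0, 0, 0, 0;
    0, 0, 0, 0, 0, 0, 0, 0, 0, 0, 1, 0, 0, 0, 0, 0, 0, 0;
    0, 0, 0, 0, 0, 0, 0, 0, 0, 0, -1, -2, 0, 0, 0, 0, 0, 0;
    0, 0, 0, 0, 0, 0, 0, 0, 0, 0, 1, 2, 3, 0, 0, 0, 0, 0;
    0, 0, 0, 0, 0, 0, 0, 0, 0, 0, -1, -2, -3, -4, 0, 0, 0, 0;
    0, 0, 0, 0, 0, 0, 0, 0, 0, 0, 1, 2, 3, 4, 5, 0, 0, 0;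
    0, 0, 0, 0, 0, 0, 0, 0, 0, 0, -1, -2, -3, -4, -5, -6, 0, 0;
    0, 0, 0, 0, 0, 0, 0, 0, 0, 0, 1, 2, 3, 4, 5, 6, 7, 0;
    0, 0, 0, 0, 0, 0, 0, 0, 0, 0, -14, -28, -42, -56, -70, -84, -42, -56]

def RR2 : Matrix (Fin 18) (Fin 18) ℤ :=
  !![1, 0, 0, 0, 0, 0, 0, 0, 0, 0, 0, 0, 0, 0, 0, 0, 0, 0;
    0, 1, 0, 0, 0, 0, 0, 0, 0, 0, 0, 0, 0, 0, 0, 0, 0, 0;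
    0, 0, -2, 1, 0, 0, 0, 0, 0, 0, 0, 0, 0, 0, 0, 0, 0, 0;
    0, 0, 0, 3, -2, 0, 0, 0, 0, 0, 0, 0, 0, 0, 0, 0, 0, 0;
    0, 0, 0, 0, -4, 3, 0, 0, 0, 3, 0, 0, 0, 0, 0, 0, 0, 0;
    0, 0, 0, 0, 0, 5, -4, 0, 0, -3, 0, 0, 0, 0, 0, 0, 0, 0;
    0, 0, 0, 0, 0, 0, -6, 5, 0, 3, 0, 0, 0, 0, 0, 0, 0, 0;
    0, 0, 0, 0, 0, 0, 0, 7, -6, -3, 0, 0, 0, 0, 0, 0, 0, 0;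
    0, 0, 0, 0, 0, 0, 0, 0, -8, 3, 0, 0, 0, 0, 0, 0, 0, 0;
    0, 0, 0, 0, 0, 0, 0, 0, 0, 840, 0, 0, 0, 0, 0, 0, 0, 0;
    0, 0, 0, 0, 0, 0, 0, 0, 0, 0, -2, 1, 0, 0, 0, 0, 0, 0;
    0, 0, 0, 0, 0, 0, 0, 0, 0, 0, 0, 3, -2, 0, 0, 0, 0, 0;
    0, 0, 0, 0, 0, 0, 0, 0, 0, 0, 0, 0, -4, 3, 0, 0, 0, 0;
    0, 0, 0, 0, 0, 0, 0, 0, 0, 0, 0, 0, 0, 5, -4, 0, 0, 0;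
    0, 0, 0, 0, 0, 0, 0, 0, 0, 0, 0, 0, 0, 0, -6, 5, 0, 0;
    0, 0, 0, 0, 0, 0, 0, 0, 0, 0, 0, 0, 0, 0, 0, 7, -6, -6;
    0, 0, 0, 0, 0, 0, 0, 0, 0, 0, 0, 0, 0, 0, 0, 0, -8, 6;
    0, 0, 0, 0, 0, 0, 0, 0, 0, 0, 0, 0, 0, 0, 0, 0, 0, 28]

def SM1 : Matrix (Fin 18) (Fin 18) ℤ :=
  !![1, 1, 0, 0, 0, 0, 0, 0, 0, 0, 0, 0, 0, 0, 0, 0, 0, 0;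
    1, -1, 0, 0, 0, 0, 0, 0, 0, 0, 0, 0, 0, 0, 0, 0, 0, 0;
    0, 0, -2, 1, 0, 0, 0, 0, 0, 0, 0, 0, 0, 0, 0, 0, 0, 0;
    0, 0, 0, -3, 2, 0, 0, 0, 0, 0, 0, 0, 0, 0, 0, 0, 0, 0;
    0, 0, 0, 0, -4, 3, 0, 0, 0, 3, 0, 0, 0, 0, 0, 0, 0, 0;
    0, 0, 0, 0, 0, -5, 4, 0, 0, 3, 0, 0, 0, 0, 0, 0, 0, 0;
    0, 0, 0, 0, 0, 0, -6, 5, 0, 3, 0, 0, 0, 0, 0, 0, 0, 0;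
    0, 0, 0, 0, 0, 0, 0, -7, 6, 3, 0, 0, 0, 0, 0, 0, 0, 0;
    0, 0, 0, 0, 0, 0, 0, 0, -8, 3, 0, 0, 0, 0, 0, 0, 0, 0;
    0, 0, 0, 0, 0, 0, 0, 0, 0, -1, 0, 0, 0, 0, 0, 0, 0, 0;
    0, 0, 0, 0, 0, 0, 0, 0, 0, 0, -2, 1, 0, 0, 0, 0, 0, 0;
    0, 0, 0, 0, 0, 0, 0, 0, 0, 0, 0, -3, 2, 0, 0, 0, 0, 0;
    0, 0, 0, 0, 0, 0, 0, 0, 0, 0, 0, 0, -4, 3, 0, 0, 3, 0;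
    0, 0, 0, 0, 0, 0, 0, 0, 0, 0, 0, 0, 0, -5, 4, 0, 3, 0;
    0, 0, 0, 0, 0, 0, 0, 0, 0, 0, 0, 0, 0, 0, -6, 5, 3, 0;
    0, 0, 0, 0, 0, 0, 0, 0, 0, 0, 0, 0, 0, 0, 0, -7, 3, 0;
    0, 0, 0, 0, 0, 0, 0, 0, 0, 0, 0, 0, 0, 0, 0, 0, -2, 0;
    0, 0, 0, 0, 0, 0, 0, 0, 0, 0, 0, 0, 0, 0, 0, 0, 0, -2]

def SM2 : Matrix (Fin 18) (Fin 18) ℤ :=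
  !![1, 1, 0, 0, 0, 0, 0, 0, 0, 0, 0, 0, 0, 0, 0, 0, 0, 0;
    1, -1, 0, 0, 0, 0, 0, 0, 0, 0, 0, 0, 0, 0, 0, 0, 0, 0;
    0, 0, -2, 1, 0, 0, 0, 0, 0, 0, 0, 0, 0, 0, 0, 0, 0, 0;
    0, 0, 0, -3, 2, 0, 0, 0, 0, 0, 0, 0, 0, 0, 0, 0, 0, 0;
    0, 0, 0, 0, -4, 3, 0, 0, 0, 3, 0, 0, 0, 0, 0, 0, 0, 0;
    0, 0, 0, 0, 0, -5, 4, 0, 0, 3, 0, 0, 0, 0, 0, 0, 0, 0;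
    0, 0, 0, 0, 0, 0, -6, 5, 0, 3, 0, 0, 0, 0, 0, 0, 0, 0;
    0, 0, 0, 0, 0, 0, 0, -7, 6, 3, 0, 0, 0, 0, 0, 0, 0, 0;
    0, 0, 0, 0, 0, 0, 0, 0, -8, 3, 0, 0, 0, 0, 0, 0, 0, 0;
    0, 0, 0, 0, 0, 0, 0, 0, 0, -1, 0, 0, 0, 0, 0, 0, 0, 0;
    0, 0, 0, 0, 0, 0, 0, 0, 0, 0, -2, 1, 0, 0, 0, 0, 0, 0;
    0, 0, 0, 0, 0, 0, 0, 0, 0, 0, 0, -3, 2, 0, 0, 0, 0, 0;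
    0, 0, 0, 0, 0, 0, 0, 0, 0, 0, 0, 0, -4, 3, 0, 0, 0, 0;
    0, 0, 0, 0, 0, 0, 0, 0, 0, 0, 0, 0, 0, -5, 4, 0, 0, 0;
    0, 0, 0, 0, 0, 0, 0, 0, 0, 0, 0, 0, 0, 0, -6, 5, 0, 0;
    0, 0, 0, 0, 0, 0, 0, 0, 0, 0, 0, 0, 0, 0, 0, -7, 6, 6;
    0, 0, 0, 0, 0, 0, 0, 0, 0, 0, 0, 0, 0, 0, 0, 0, -8, 6;
    0, 0, 0, 0, 0, 0, 0, 0, 0, 0, 0, 0, 0, 0, 0, 0, 0, -2]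

def Lm : Matrix (Fin 18) (Fin 18) (ZMod 4) :=
  !![0, 0, 0, 0, 0, 0, 0, 0, 0, 0, 0, 0, 0, 0, 0, 0, 0, 0;
    1, 0, 0, 0, 0, 0, 0, 0, 0, 0, 0, 0, 0, 0, 0, 0, 0, 0;
    0, 0, 0, 0, 0, 0, 0, 0, 0, 0, 0, 0, 0, 0, 0, 0, 0, 0;
    0, 0, 1, 0, 0, 0, 0, 0, 0, 0, 0, 0, 0, 0, 0, 0, 0, 0;
    0, 0, 0, 0, 0, 0, 0, 0, 0, 0, 0, 0, 0, 0, 0, 0, 0, 0;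
    0, 0, 0, 0, 0, 0, 0, 0, 0, 0, 0, 0, 0, 0, 0, 0, 0, 0;
    0, 0, 0, 0, 0, 1, 0, 0, 0, 0, 0, 0, 0, 0, 0, 0, 0, 0;
    0, 0, 0, 0, 0, 0, 0, 0, 0, 0, 0, 0, 0, 0, 0, 0, 0, 0;
    0, 0, 0, 0, 0, 1, 0, 1, 0, 0, 0, 0, 0, 0, 0, 0, 0, 0;
    0, 0, 1, 0, 1, 0, 1, 0, 1, 0, 0, 0, 0, 0, 0, 0, 0, 0;
    0, 0, 0, 0, 0, 0, 0, 0, 0, 0, 0, 0, 0, 0, 0, 0, 0, 0;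
    0, 0, 0, 0, 0, 0, 0, 0, 0, 0, 0, 0, 0, 0, 0, 0, 0, 0;
    0, 0, 0, 0, 0, 0, 0, 0, 0, 0, 0, 0, 0, 0, 0, 0, 0, 0;
    0, 0, 0, 0, 0, 0, 0, 0, 0, 0, 0, 0, 0, 0, 0, 0, 0, 0;
    0, 0, 0, 0, 0, 0, 0, 0, 0, 0, 0, 0, 0, 0, 0, 0, 0, 0;
    0, 0, 0, 0, 0, 0, 0, 0, 0, 0, 0, 0, 0, 0, 0, 0, 0, 0;
    0, 0, 0, 0, 0, 0, 0, 0, 0, 0, 0, 0, 0, 0, 0, 0, 0, 0;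
    0, 0, 0, 0, 0, 0, 0, 0, 0, 0, 0, 0, 0, 0, 0, 0, 0, 0]

def B8 : Matrix (Fin 8) (Fin 8) (ZMod 4) :=
  !![0, 2, 0, 2, 0, 2, 0, 0;
    2, 0, 0, 0, 0, 0, 0, 0;
    0, 0, 0, 2, 0, 2, 0, 0;
    2, 0, 2, 1, 2, 3, 3, 0;
    0, 0, 0, 2, 0, 0, 2, 0;
    2, 0, 2, 3, 0, 1, 1, 0;
    0, 0, 0, 3, 2, 1, 1, 0;
    0, 0, 0, 0, 0, 0, 0, 3]

def Esel : Matrix (Fin 8) (Fin 18) (ZMod 4) :=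
  !![0, 0, 0, 0, 0, 0, 0, 0, 0, 0, 1, 0, 0, 0, 0, 0, 0, 0;
    0, 0, 0, 0, 0, 0, 0, 0, 0, 0, 0, 1, 0, 0, 0, 0, 0, 0;
    0, 0, 0, 0, 0, 0, 0, 0, 0, 0, 0, 0, 1, 0, 0, 0, 0, 0;
    0, 0, 0, 0, 0, 0, 0, 0, 0, 0, 0, 0, 0, 1, 0, 0, 0, 0;
    0, 0, 0, 0, 0, 0, 0, 0, 0, 0, 0, 0, 0, 0, 1, 0, 0, 0;
    0, 0, 0, 0, 0, 0, 0, 0, 0, 0, 0, 0, 0, 0, 0, 1, 0, 0;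
    0, 0, 0, 0, 0, 0, 0, 0, 0, 0, 0, 0, 0, 0, 0, 0, 1, 0;
    0, 0, 0, 0, 0, 0, 0, 0, 0, 0, 0, 0, 0, 0, 0, 0, 0, 1]

def wit : Fin 18 → ℤ := ![0, 0, 0, 0, 0, 0, 0, 0, 0, 0, 0, 0, 0, 0, 0, 0, 1, 1]


def red (x : ZMod 4) : Bool := decide (x = 1 ∨ x = 3)

def co (x : ZMod 4) : ZMod 4 := if x = 2 ∨ x = 3 then 1 else 0

lemma signature_of {n : ℕ} (M S : Matrix (Fin n) (Fin n) ℤ) (d : Fin n → ℤ)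
    (kp kn : ℕ)
    (hsym : Mᵀ = M)
    (hcong : Sᵀ * M * S = Matrix.diagonal d)
    (hd : ∀ i, d i ≠ 0)
    (hdp : (Finset.univ.filter fun i => 0 < d i).card = kp)
    (hdn : (Finset.univ.filter fun i => d i < 0).card = kn)
    (hdet : M.det ≠ 0) :
    ∃ h : (M.map (Int.cast : ℤ → ℝ)).IsHermitian,
      (Finset.univ.filter fun i => 0 < h.eigenvalues i).card = kp ∧
      (Finset.univ.filter fun i => h.eigenvalues i < 0).card = kn := by
  have hA : (M.map (Int.cast : ℤ → ℝ)).IsHermitian := by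
    show _ᴴ = _
    rw [conjTranspose_eq_transpose_of_trivial, ← transpose_map, hsym]
  refine ⟨hA, ?_⟩
  have hmapmul : ∀ (X Y : Matrix (Fin n) (Fin n) ℤ),
      (X * Y).map (Int.cast : ℤ → ℝ) = X.map Int.cast * Y.map Int.cast := by
    intro X Y
    have := Matrix.map_mul (L := X) (M := Y) (f := Int.castRingHom ℝ)
    simpa [Int.coe_castRingHom] using this
  have hcongR : (S.map (Int.cast : ℤ → ℝ))ᵀ * M.map (Int.cast : ℤ → ℝ) * S.map (Int.cast : ℤ → ℝ)
      = diagonal (fun i => (d i : ℝ)) := by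
    rw [← transpose_map, ← hmapmul, ← hmapmul, hcong, diagonal_map (by simp)]
  have hdetR : (M.map (Int.cast : ℤ → ℝ)).det = (M.det : ℝ) := by
    have := RingHom.map_det (Int.castRingHom ℝ) M
    simpa [Int.coe_castRingHom] using this.symm
  have hdetR0 : (M.map (Int.cast : ℤ → ℝ)).det ≠ 0 := by
    rw [hdetR]
    exact Int.cast_ne_zero.mpr hdet
  have hdS : IsUnit (S.map (Int.cast : ℤ → ℝ)).det := by
    rw [isUnit_iff_ne_zero]
    intro h0
    have hc := congrArg Matrix.det hcongR
    rw [det_mul, det_mul, det_transpose, h0, det_diagonal] at hc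
    simp only [mul_zero, zero_mul] at hc
    exact (Finset.prod_ne_zero_iff.mpr fun i _ => Int.cast_ne_zero.mpr (hd i)) hc.symm
  obtain ⟨hpos, hneg⟩ := eigen_card (M.map (Int.cast : ℤ → ℝ)) (S.map (Int.cast : ℤ → ℝ)) hA
    (fun i => (d i : ℝ)) hdS hcongR (fun i => Int.cast_ne_zero.mpr (hd i)) hdetR0
  have hfp : (Finset.univ.filter fun i => (0:ℝ) < (d i : ℝ))
      = (Finset.univ.filter fun i => 0 < d i) := by
    apply Finset.filter_congr
    intro i _
    simp [Int.cast_pos]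
  have hfn : (Finset.univ.filter fun i => ((d i : ℝ) < 0))
      = (Finset.univ.filter fun i => d i < 0) := by
    apply Finset.filter_congr
    intro i _
    simp
  constructor
  · rw [hpos, hfp, hdp]
  · rw [hneg, hfn, hdn]

lemma hcong1 : S1ᵀ * gramUE8E7A1 * S1 = Matrix.diagonal d1 := by
  have e1 : S1ᵀ * gramUE8E7A1 = SM1 := by decide
  have e2 : SM1 * S1 = Matrix.diagonal d1 := by decide
  rw [e1, e2]

lemma hcong2 : S2ᵀ * gramUE8D8 * S2 = Matrix.diagonal d2 := by
  have e1 : S2ᵀ * gramUE8D8 = SM2 := by decide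
  have e2 : SM2 * S2 = Matrix.diagonal d2 := by decide
  rw [e1, e2]

lemma det_cert {n : ℕ} (M L R : Matrix (Fin n) (Fin n) ℤ) (σ : Equiv.Perm (Fin n))
    (a b z : ℤ)
    (h : L * (M.submatrix σ id) = R)
    (hL : L.BlockTriangular OrderDual.toDual)
    (hR : R.BlockTriangular id)
    (hsign : Equiv.Perm.sign σ = -1)
    (hLd : (∏ i, L i i) = a)
    (hRd : (∏ i, R i i) = b)
    (hz : a * z = -b)
    (ha : a ≠ 0) :
    M.det = z := by
  have hsd : (M.submatrix σ id).det = - M.det := by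
    rw [Matrix.det_permute, hsign]
    simp
  have hd := congrArg Matrix.det h
  rw [det_mul, hsd, Matrix.det_of_lowerTriangular L hL,
    Matrix.det_of_upperTriangular hR, hLd, hRd, mul_neg] at hd
  have e2 : a * M.det = a * z := by rw [hz]; linarith
  exact mul_left_cancel₀ ha e2

lemma detM1 : gramUE8E7A1.det = -4 :=
  det_cert gramUE8E7A1 LL1 RR1 (Equiv.swap 0 1)
    (-20483850240000) (-81935400960000) (-4)
    (by decide)
    (fun i j hij => (@of_decide_eq_true _ (@Fintype.decidableForallFintype _ _ (fun i => @Fintype.decidableForallFintype _ _ (fun j => instDecidableForall) _) _) (by decide) :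
      ∀ i j : Fin 18, OrderDual.toDual j < OrderDual.toDual i → LL1 i j = 0) i j hij)
    (fun i j hij => (@of_decide_eq_true _ (@Fintype.decidableForallFintype _ _ (fun i => @Fintype.decidableForallFintype _ _ (fun j => instDecidableForall) _) _) (by decide) : ∀ i j : Fin 18, (id j : Fin 18) < id i → RR1 i j = 0) i j hij)
    (Equiv.Perm.sign_swap (by decide))
    (by decide) (by decide) (by decide) (by decide)

lemma detM2 : gramUE8D8.det = -4 :=
  det_cert gramUE8D8 LL2 RR2 (Equiv.swap 0 1)
    (9559130112000) (38236520448000) (-4)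
    (by decide)
    (fun i j hij => (@of_decide_eq_true _ (@Fintype.decidableForallFintype _ _ (fun i => @Fintype.decidableForallFintype _ _ (fun j => instDecidableForall) _) _) (by decide) :
      ∀ i j : Fin 18, OrderDual.toDual j < OrderDual.toDual i → LL2 i j = 0) i j hij)
    (fun i j hij => (@of_decide_eq_true _ (@Fintype.decidableForallFintype _ _ (fun i => @Fintype.decidableForallFintype _ _ (fun j => instDecidableForall) _) _) (by decide) : ∀ i j : Fin 18, (id j : Fin 18) < id i → RR2 i j = 0) i j hij)
    (Equiv.Perm.sign_swap (by decide))
    (by decide) (by decide) (by decide) (by decide)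

lemma not_isometric :
    ¬ ∃ P : Matrix (Fin 18) (Fin 18) ℤ, IsUnit P.det ∧ Pᵀ * gramUE8E7A1 * P = gramUE8D8 := by
  rintro ⟨P, hP, hPMP⟩
  have hi : Invertible P := P.invertibleOfIsUnitDet hP
  set Q : Matrix (Fin 18) (Fin 18) ℤ := ⅟P with hQ
  have hPQ : P * Q = 1 := mul_invOf_self P
  have hQP : Q * P = 1 := invOf_mul_self P
  have hM1K1 : gramUE8E7A1 * K1 = (2:ℤ) • (1 : Matrix (Fin 18) (Fin 18) ℤ) := by decide
  have hM2K2 : gramUE8D8 * K2 = (2:ℤ) • (1 : Matrix (Fin 18) (Fin 18) ℤ) := by decide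
  have hK2M2 : K2 * gramUE8D8 = (2:ℤ) • (1 : Matrix (Fin 18) (Fin 18) ℤ) := by decide
  have h1 : gramUE8D8 * (Q * K1 * Qᵀ) = (2:ℤ) • (1 : Matrix (Fin 18) (Fin 18) ℤ) := by
    rw [← hPMP]
    simp only [mul_assoc]
    rw [← mul_assoc P Q, hPQ, one_mul, ← mul_assoc gramUE8E7A1 K1, hM1K1,
      smul_mul_assoc, one_mul, mul_smul_comm, ← transpose_mul, hQP, transpose_one]
  have h2 : Q * K1 * Qᵀ = K2 := by
    have h3 : K2 * (gramUE8D8 * (Q * K1 * Qᵀ)) = K2 * ((2:ℤ) • (1 : Matrix (Fin 18) (Fin 18) ℤ)) := by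
      rw [h1]
    rw [← mul_assoc, hK2M2, smul_mul_assoc, one_mul, mul_smul_comm, mul_one] at h3
    ext i j
    have h4 := congrFun (congrFun h3 i) j
    simp only [Matrix.smul_apply, smul_eq_mul] at h4
    omega
  have hwit : wit ⬝ᵥ (K2 *ᵥ wit) = -14 := by decide
  have huval : (Qᵀ *ᵥ wit) ⬝ᵥ (K1 *ᵥ (Qᵀ *ᵥ wit)) = -14 := by
    rw [← quad_congr K1 Qᵀ wit, transpose_transpose, h2, hwit]
  have hcast := cast_quad K1 (Qᵀ *ᵥ wit)
  rw [huval] at hcast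
  have hdecomp : K1.map (Int.cast : ℤ → ZMod 4)
      = (((2 : ZMod 4) • Lm) + (2 : ZMod 4) • Lmᵀ) + Eselᵀ * B8 * Esel := by decide
  rw [hdecomp, add_mulVec, dotProduct_add, LLT_quad, zero_add, sandwich] at hcast
  set w : Fin 8 → ZMod 4 := Esel *ᵥ (fun i => (((Qᵀ *ᵥ wit) i : ℤ) : ZMod 4)) with hw
  have hsplit : ∀ x : ZMod 4, x = (if red x then (1 : ZMod 4) else 0) + 2 * co x := by decide
  have hweq : w = (fun i => if red (w i) then (1 : ZMod 4) else 0)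
      + (2 : ZMod 4) • (fun i => co (w i)) := by
    funext i
    have := hsplit (w i)
    simpa [Pi.add_apply, Pi.smul_apply, smul_eq_mul] using this
  have hB8sym : B8ᵀ = B8 := by decide
  rw [hweq, quad_shift B8 hB8sym] at hcast
  have hvals : ∀ g : Fin 8 → Bool,
      ((fun i => if g i then (1 : ZMod 4) else 0) ⬝ᵥ
        (B8 *ᵥ fun i => if g i then (1 : ZMod 4) else 0)) ≠ ((-14 : ℤ) : ZMod 4) := by decide
  exact hvals (fun i => red (w i)) hcast

end S16

set_option maxRecDepth 4000 in
set_option maxHeartbeats 12000000 in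
/-- U ⊕ E₈ ⊕ E₇ ⊕ A₁ and U ⊕ E₈ ⊕ D₈ both have rank 18, signature (1,17) and
discriminant number 4, yet they are not isometric. In particular the pair
(rank, discriminant number) does not determine an even hyperbolic lattice up to
isometry. -/
theorem statement_16 :
    (∃ h : (gramUE8E7A1.map (Int.cast : ℤ → ℝ)).IsHermitian,
      (Finset.univ.filter fun i => 0 < h.eigenvalues i).card = 1 ∧
      (Finset.univ.filter fun i => h.eigenvalues i < 0).card = 17) ∧
    (∃ h : (gramUE8D8.map (Int.cast : ℤ → ℝ)).IsHermitian,
      (Finset.univ.filter fun i => 0 < h.eigenvalues i).card = 1 ∧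
      (Finset.univ.filter fun i => h.eigenvalues i < 0).card = 17) ∧
    |gramUE8E7A1.det| = 4 ∧ |gramUE8D8.det| = 4 ∧
    ¬ ∃ P : Matrix (Fin 18) (Fin 18) ℤ, IsUnit P.det ∧ Pᵀ * gramUE8E7A1 * P = gramUE8D8 := by
  refine ⟨?_, ?_, ?_, ?_, ?_⟩
  · exact S16.signature_of gramUE8E7A1 S16.S1 S16.d1 1 17 (by decide) S16.hcong1
      (by decide) (by decide) (by decide) (by rw [S16.detM1]; decide)
  · exact S16.signature_of gramUE8D8 S16.S2 S16.d2 1 17 (by decide) S16.hcong2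
      (by decide) (by decide) (by decide) (by rw [S16.detM2]; decide)
  · rw [S16.detM1]; decide
  · rw [S16.detM2]; decide
  · exact S16.not_isometric
end
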